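/- arXiv:2004.09209 — 4 statements merged into one kernel-verified Lean document; each statement's English description precedes it below -/
import Mathlib

section
/- Let B = [[f, 1], [-1, f]] with f ≥ 0, and let R be any nonsingular 2×2 real matrix. Then ρ(|B|) ≤ ρ(|R B R⁻¹|), where |·| denotes the entrywise absolute value and ρ the spectral radius. In other words, no similarity transformation can decrease the spectral radius of the absolute value of such a block below f + 1. -/
/-!
The matrix |B| = [[f, 1], [1, f]] has eigenvalues f ± 1, so ρ(|B|) = f + 1. A conjugate
C = R B R⁻¹ still has trace 2f and determinant f² + 1. The nonnegative matrix |C| has the real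
eigenvalue x₊, the larger root of (x - |c₁₁|)(x - |c₂₂|) - |c₁₂ c₂₁|, and x₊ ≥ f + 1 because this
quadratic is nonpositive at f + 1: the determinant gives |c₁₂ c₂₁| ≥ f² + 1 - c₁₁ c₂₂, and the
trace gives c₁₁ c₂₂ ≤ f² and |c₁₁| + |c₂₂| ≥ 2f.
-/

noncomputable def specRad {m : Type*} [Fintype m] [DecidableEq m] (M : Matrix m m ℝ) : ℝ :=
  sSup ((fun μ : ℂ => ‖μ‖) '' spectrum ℂ (M.map Complex.ofReal))

theorem Matrix.mem_spectrum_fin_two_iff {K : Type*} [Field K] (M : Matrix (Fin 2) (Fin 2) K)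
    (μ : K) : μ ∈ spectrum K M ↔ (μ - M 0 0) * (μ - M 1 1) - M 0 1 * M 1 0 = 0 := by
  rw [spectrum.mem_iff, Matrix.isUnit_iff_isUnit_det, isUnit_iff_ne_zero, not_ne_iff,
    Matrix.det_fin_two]
  simp [Matrix.algebraMap_eq_diagonal]

section specRad

variable {m : Type*} [Fintype m] [DecidableEq m]

theorem norm_le_specRad {M : Matrix m m ℝ} {μ : ℂ}
    (hμ : μ ∈ spectrum ℂ (M.map Complex.ofReal)) : ‖μ‖ ≤ specRad M :=
  le_csSup ((Matrix.finite_spectrum _).image _).bddAbove ⟨μ, hμ, rfl⟩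

theorem specRad_le {M : Matrix m m ℝ} {c : ℝ} (hc : 0 ≤ c)
    (h : ∀ μ ∈ spectrum ℂ (M.map Complex.ofReal), ‖μ‖ ≤ c) : specRad M ≤ c :=
  Real.sSup_le (by rintro _ ⟨μ, hμ, rfl⟩; exact h μ hμ) hc

end specRad

theorem specRad_fin_two_symm_le (a b : ℝ) : specRad !![a, b; b, a] ≤ |a| + |b| := by
  refine specRad_le (by positivity) fun μ hμ => ?_
  rw [Matrix.mem_spectrum_fin_two_iff] at hμ
  simp only [Matrix.map_apply, Matrix.of_apply, Matrix.cons_val', Matrix.cons_val_zero,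
    Matrix.cons_val_one, Matrix.empty_val', Matrix.cons_val_fin_one] at hμ
  have hroots : (μ - (a + b : ℝ)) * (μ - (a - b : ℝ)) = 0 := by push_cast; linear_combination hμ
  rcases mul_eq_zero.mp hroots with h | h
  · rw [sub_eq_zero.mp h, Complex.norm_real, Real.norm_eq_abs]
    exact abs_add_le a b
  · rw [sub_eq_zero.mp h, Complex.norm_real, Real.norm_eq_abs]
    exact abs_sub a b

theorem le_add_sqrt_of_mul_sub_le {p t k x : ℝ} (h : (x - p) * (x - t) ≤ k) :
    x ≤ (p + t + √((p - t) ^ 2 + 4 * k)) / 2 := by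
  have hsqrt : |2 * x - p - t| ≤ √((p - t) ^ 2 + 4 * k) := Real.abs_le_sqrt (by nlinarith)
  linarith [le_abs_self (2 * x - p - t)]

theorem le_specRad_fin_two {N : Matrix (Fin 2) (Fin 2) ℝ} {x : ℝ}
    (hx : (x - N 0 0) * (x - N 1 1) ≤ N 0 1 * N 1 0) : x ≤ specRad N := by
  set disc := (N 0 0 - N 1 1) ^ 2 + 4 * (N 0 1 * N 1 0)
  set root := (N 0 0 + N 1 1 + √disc) / 2
  have hdisc : √disc ^ 2 = disc :=
    Real.sq_sqrt (by simp only [disc]; nlinarith [sq_nonneg (2 * x - N 0 0 - N 1 1)])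
  have hroot : ((root : ℝ) : ℂ) ∈ spectrum ℂ (N.map Complex.ofReal) := by
    rw [Matrix.mem_spectrum_fin_two_iff]
    simp only [Matrix.map_apply]
    exact_mod_cast (by linear_combination hdisc / 4 :
      (root - N 0 0) * (root - N 1 1) - N 0 1 * N 1 0 = 0)
  calc x ≤ root := le_add_sqrt_of_mul_sub_le hx
    _ ≤ ‖((root : ℝ) : ℂ)‖ := by rw [Complex.norm_real, Real.norm_eq_abs]; exact le_abs_self _
    _ ≤ specRad N := norm_le_specRad hroot

theorem sub_abs_mul_sub_abs_le {f a b c d : ℝ} (hf : 0 ≤ f) (htr : a + d = 2 * f)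
    (hdet : a * d - b * c = f ^ 2 + 1) : (f + 1 - |a|) * (f + 1 - |d|) ≤ |b| * |c| := by
  have hbc : f ^ 2 + 1 - a * d ≤ |b| * |c| := by
    rw [← abs_mul]; exact (neg_le_abs _).trans_eq' (by linarith)
  rcases le_total 0 (a * d) with had | had
  · have ha : 0 ≤ a := by nlinarith
    have hd : 0 ≤ d := by nlinarith
    rw [abs_of_nonneg ha, abs_of_nonneg hd]
    nlinarith [sq_nonneg (a - d)]
  · have hprod : |a| * |d| = -(a * d) := by rw [← abs_mul, abs_of_nonpos had]
    have hsum : 2 * f ≤ |a| + |d| := htr ▸ abs_add_le a d |>.trans' (le_abs_self _)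
    nlinarith

theorem le_specRad_map_abs_of_trace_det {M : Matrix (Fin 2) (Fin 2) ℝ} {f : ℝ} (hf : 0 ≤ f)
    (htr : M.trace = 2 * f) (hdet : M.det = f ^ 2 + 1) : f + 1 ≤ specRad (M.map abs) := by
  rw [Matrix.trace_fin_two] at htr
  rw [Matrix.det_fin_two] at hdet
  exact le_specRad_fin_two (sub_abs_mul_sub_abs_le hf htr hdet)

theorem stmt2 (f : ℝ) (hf : 0 ≤ f) (R : Matrix (Fin 2) (Fin 2) ℝ) (hR : IsUnit R.det) :
    specRad ((!![f, 1; -1, f] : Matrix (Fin 2) (Fin 2) ℝ).map fun x => |x|) ≤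
      specRad ((R * !![f, 1; -1, f] * R⁻¹).map fun x => |x|) := by
  have hRu : IsUnit R := (Matrix.isUnit_iff_isUnit_det R).mpr hR
  calc specRad ((!![f, 1; -1, f] : Matrix (Fin 2) (Fin 2) ℝ).map fun x => |x|)
      = specRad !![f, 1; 1, f] := by
        rw [Matrix.eta_fin_two (Matrix.map _ _)]; simp [abs_of_nonneg hf]
    _ ≤ f + 1 := (specRad_fin_two_symm_le f 1).trans_eq (by rw [abs_of_nonneg hf, abs_one])
    _ ≤ _ := le_specRad_map_abs_of_trace_det hf
      (by rw [Matrix.trace_conj hRu, Matrix.trace_fin_two_of]; ring)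
      (by rw [Matrix.det_conj hRu, Matrix.det_fin_two_of]; ring)
end

section
/- Let R = [[a,b],[c,d]] be a real 2×2 matrix with determinant ad − bc = 1. Then det(C − (f−1)I₂) = −2(ac + bd)² ≤ 0, where C = [[f − (bd+ac), a² + b²], [c² + d², f + (bd+ac)]] and f ≥ 0 is arbitrary. -/
theorem stmt3 (a b c d f : ℝ) (hdet : a * d - b * c = 1) (hf : 0 ≤ f) :
    ((!![f - (b*d + a*c), a^2 + b^2; c^2 + d^2, f + (b*d + a*c)] : Matrix (Fin 2) (Fin 2) ℝ)
        - (f - 1) • (1 : Matrix (Fin 2) (Fin 2) ℝ)).det = -2 * (a*c + b*d)^2 ∧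
    -2 * (a*c + b*d)^2 ≤ 0 := by
  constructor
  · simp [Matrix.det_fin_two, Matrix.one_apply]
    nlinarith [sq_nonneg (a*d - b*c)]
  · nlinarith [sq_nonneg (a*c + b*d)]
end

section
/- Let A ∈ ℝⁿˣʳ, B ∈ ℝⁿˣʳ (r ≤ n), and let R be an invertible n×n matrix such that R·A = [Iᵣ; 0] (the first r rows form the r×r identity, the rest are zero). Then ρ(|R A Bᵀ R⁻¹|) = ρ(|Bᵀ A|), where |·| denotes entrywise absolute value and ρ the spectral radius. -/
open Polynomial Matrix

lemma aux_spectrum_iff {m : Type*} [Fintype m] [DecidableEq m] (M : Matrix m m ℂ) (μ : ℂ) :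
    μ ∈ spectrum ℂ M ↔ M.charpoly.eval μ = 0 := by
  rw [spectrum.mem_iff, Matrix.isUnit_iff_isUnit_det, isUnit_iff_ne_zero, not_not]
  have : ((algebraMap ℂ (Matrix m m ℂ)) μ - M).det = M.charpoly.eval μ := by
    have h1 : (algebraMap ℂ (Matrix m m ℂ)) μ - M =
        (charmatrix M).map (Polynomial.evalRingHom μ) := by
      ext i j
      by_cases h : i = j <;>
        simp [h, charmatrix_apply, Matrix.algebraMap_matrix_apply, Matrix.diagonal_apply]
    rw [h1, ← RingHom.mapMatrix_apply, ← RingHom.map_det, Matrix.charpoly]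
    rfl
  rw [this]

lemma aux_charpoly_zero {m : Type*} [Fintype m] [DecidableEq m] :
    (0 : Matrix m m ℂ).charpoly = Polynomial.X ^ (Fintype.card m) := by
  have h : charmatrix (0 : Matrix m m ℂ) = Matrix.diagonal (fun _ => (Polynomial.X : ℂ[X])) := by
    ext i j
    by_cases h : i = j <;> simp [h, charmatrix_apply, Matrix.diagonal_apply]
  rw [Matrix.charpoly, h, Matrix.det_diagonal]
  simp

theorem stmt7 {n r : ℕ} (hr : r ≤ n) (A B : Matrix (Fin n) (Fin r) ℝ)
    (R : Matrix (Fin n) (Fin n) ℝ) (hR : IsUnit R.det)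
    (hRA : ∀ (i : Fin n) (j : Fin r), (R * A) i j = if (i : ℕ) = (j : ℕ) then 1 else 0) :
    specRad ((R * A * B.transpose * R⁻¹).map fun x => |x|) =
      specRad ((B.transpose * A).map fun x => |x|) := by
  classical
  set X : Matrix (Fin r) (Fin n) ℝ := B.transpose * R⁻¹ with hX
  have hbig : ∀ (i j : Fin n), (R * A * B.transpose * R⁻¹) i j =
      if h : (i : ℕ) < r then X ⟨(i : ℕ), h⟩ j else 0 := by
    intro i j
    have hm : R * A * B.transpose * R⁻¹ = (R * A) * X := by
      rw [hX, Matrix.mul_assoc]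
    rw [hm, Matrix.mul_apply]
    by_cases h : (i : ℕ) < r
    · rw [dif_pos h, Finset.sum_eq_single (⟨(i : ℕ), h⟩ : Fin r)]
      · rw [hRA]; simp
      · intro k _ hk
        rw [hRA, if_neg, zero_mul]
        intro he; exact hk (Fin.ext he.symm)
      · simp
    · rw [dif_neg h]
      apply Finset.sum_eq_zero
      intro k _
      rw [hRA, if_neg, zero_mul]
      intro he; exact h (he ▸ k.isLt)
  have hsmall : ∀ (i j : Fin r), (B.transpose * A) i j = X i (Fin.castLE hr j) := by
    intro i j
    have hm : B.transpose * A = X * (R * A) := by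
      rw [hX, Matrix.mul_assoc, ← Matrix.mul_assoc R⁻¹, Matrix.nonsing_inv_mul R hR,
        Matrix.one_mul]
    rw [hm, Matrix.mul_apply, Finset.sum_eq_single (Fin.castLE hr j)]
    · rw [hRA]; simp
    · intro k _ hk
      rw [hRA, if_neg, mul_zero]
      intro he; exact hk (Fin.ext (by simpa using he))
    · simp
  unfold specRad
  set f : ℂ → ℝ := fun μ : ℂ => ‖μ‖ with hf
  set C1 : Matrix (Fin n) (Fin n) ℂ :=
    ((R * A * B.transpose * R⁻¹).map fun x => |x|).map Complex.ofReal with hC1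
  set C2 : Matrix (Fin r) (Fin r) ℂ :=
    ((B.transpose * A).map fun x => |x|).map Complex.ofReal with hC2
  have hC1e : ∀ (i j : Fin n), C1 i j =
      if h : (i : ℕ) < r then (Complex.ofReal |X ⟨(i : ℕ), h⟩ j|) else 0 := by
    intro i j
    rw [hC1]
    simp only [Matrix.map_apply, hbig i j]
    by_cases h : (i : ℕ) < r
    · rw [dif_pos h, dif_pos h]
    · rw [dif_neg h, dif_neg h, abs_zero, Complex.ofReal_zero]
  have hC2e : ∀ (i j : Fin r), C2 i j = (Complex.ofReal |X i (Fin.castLE hr j)|) := by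
    intro i j
    rw [hC2]
    simp only [Matrix.map_apply, hsmall i j]
  have hn : n = r + (n - r) := (Nat.add_sub_cancel' hr).symm
  let e : Fin n ≃ Fin r ⊕ Fin (n - r) := (finCongr hn).trans finSumFinEquiv.symm
  have hval1 : ∀ i : Fin r, ((e.symm (Sum.inl i)) : ℕ) = (i : ℕ) := by
    intro i; simp [e]
  have hval2 : ∀ j : Fin (n - r), ((e.symm (Sum.inr j)) : ℕ) = r + (j : ℕ) := by
    intro j; simp [e]
  set D : Matrix (Fin r) (Fin (n - r)) ℂ :=
    fun i j => Complex.ofReal |X i (e.symm (Sum.inr j))| with hD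
  have hreindex : (Matrix.reindex e e C1) = Matrix.fromBlocks C2 D 0 0 := by
    ext a b
    rw [Matrix.reindex_apply, Matrix.submatrix_apply]
    cases a with
    | inl i =>
      have hi : ((e.symm (Sum.inl i)) : ℕ) < r := by rw [hval1]; exact i.isLt
      cases b with
      | inl j =>
        rw [hC1e, dif_pos hi, Matrix.fromBlocks_apply₁₁, hC2e]
        have h1 : (⟨((e.symm (Sum.inl i)) : ℕ), hi⟩ : Fin r) = i := Fin.ext (hval1 i)
        have h2 : e.symm (Sum.inl j) = Fin.castLE hr j := Fin.ext (by simp [hval1 j])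
        rw [h1, h2]
      | inr j =>
        rw [hC1e, dif_pos hi, Matrix.fromBlocks_apply₁₂, hD]
        have h1 : (⟨((e.symm (Sum.inl i)) : ℕ), hi⟩ : Fin r) = i := Fin.ext (hval1 i)
        rw [h1]
    | inr i =>
      have hi : ¬ ((e.symm (Sum.inr i)) : ℕ) < r := by rw [hval2]; omega
      cases b with
      | inl j => rw [hC1e, dif_neg hi, Matrix.fromBlocks_apply₂₁]; rfl
      | inr j => rw [hC1e, dif_neg hi, Matrix.fromBlocks_apply₂₂]; rfl
  have hcp : C1.charpoly = C2.charpoly * Polynomial.X ^ (n - r) := by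
    rw [← Matrix.charpoly_reindex e C1, hreindex, Matrix.charpoly_fromBlocks_zero₂₁,
      aux_charpoly_zero, Fintype.card_fin]
  have hs1 : spectrum ℂ C1 = spectrum ℂ C2 ∪ {μ : ℂ | μ ^ (n - r) = 0} := by
    ext μ
    simp only [Set.mem_union, Set.mem_setOf_eq, aux_spectrum_iff, hcp, Polynomial.eval_mul,
      Polynomial.eval_pow, Polynomial.eval_X, mul_eq_zero]
  rcases Nat.eq_or_lt_of_le hr with heq | hlt
  · have hd : n - r = 0 := by omega
    have h0 : {μ : ℂ | μ ^ (n - r) = 0} = ∅ := by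
      ext μ; simp [hd]
    rw [hs1, h0, Set.union_empty]
  · have hd : n - r ≠ 0 := by omega
    have h0 : {μ : ℂ | μ ^ (n - r) = 0} = {0} := by
      ext μ; simp [pow_eq_zero_iff hd]
    rw [hs1, h0]
    rcases Nat.eq_zero_or_pos r with hr0 | hrpos
    · subst hr0
      have hC2cp : C2.charpoly = 1 := by
        rw [Matrix.charpoly, Matrix.det_isEmpty]
      have hs2 : spectrum ℂ C2 = ∅ := by
        ext μ; simp [aux_spectrum_iff, hC2cp]
      rw [hs2, Set.empty_union, Set.image_empty, Set.image_singleton, Real.sSup_empty, hf]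
      simp
    · have hmono := Matrix.charpoly_monic C2
      have hne : C2.charpoly ≠ 0 := hmono.ne_zero
      have hdeg : C2.charpoly.natDegree = r := by
        rw [Matrix.charpoly_natDegree_eq_dim, Fintype.card_fin]
      have hfin : (spectrum ℂ C2).Finite := by
        apply (Polynomial.finite_setOf_isRoot hne).subset
        intro μ hμ
        exact (aux_spectrum_iff _ _).mp hμ
      have hnonempty : (spectrum ℂ C2).Nonempty := by
        obtain ⟨z, hz⟩ := Complex.exists_root
          (Polynomial.natDegree_pos_iff_degree_pos.mp (hdeg ▸ hrpos))
        exact ⟨z, (aux_spectrum_iff _ _).mpr hz⟩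
      have hbdd : BddAbove (f '' spectrum ℂ C2) := (hfin.image f).bddAbove
      obtain ⟨z, hz⟩ := hnonempty
      have hle : (0 : ℝ) ≤ sSup (f '' spectrum ℂ C2) := by
        refine le_trans (norm_nonneg z) (le_csSup hbdd ⟨z, hz, rfl⟩)
      rw [Set.image_union, Set.image_singleton]
      have hf0 : f 0 = 0 := by simp [hf]
      rw [hf0, csSup_union hbdd ⟨f z, z, hz, rfl⟩ bddAbove_singleton ⟨0, rfl⟩,
        csSup_singleton, sup_eq_left.mpr hle]
end

section
/- Suppose for every k = 1,…,K the real n×n matrix A⁽ᵏ⁾ has at most one nonzero element in each column. Then for any real n×n matrix R and any interval vector p ∈ 𝕀ℝᴷ, the interval matrix evaluations H₁ := A⁽⁰⁾ + Σₖ (R A⁽ᵏ⁾) pₖ and H₂ := A⁽⁰⁾ + R (Σₖ A⁽ᵏ⁾ pₖ) are equal (entrywise as interval matrices). -/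
/-- interval scalar multiplication: c · [lo, hi] -/
def smulI (c : ℝ) (x : ℝ × ℝ) : ℝ × ℝ := (min (c * x.1) (c * x.2), max (c * x.1) (c * x.2))

/-- interval containment: x ⊆ y -/
def subI (x y : ℝ × ℝ) : Prop := y.1 ≤ x.1 ∧ x.2 ≤ y.2

lemma zero_smulI (x : ℝ × ℝ) : smulI 0 x = 0 := by simp [smulI, Prod.ext_iff]

lemma smulI_smulI (c d : ℝ) (x : ℝ × ℝ) : smulI c (smulI d x) = smulI (c * d) x := by
  unfold smulI
  rcases le_total (d * x.1) (d * x.2) with h | h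
  · rw [min_eq_left h, max_eq_right h]
    simp [mul_assoc]
  · rw [min_eq_right h, max_eq_left h]
    simp [mul_assoc, min_comm, max_comm]

lemma smulI_add (c : ℝ) {x y : ℝ × ℝ} (hx : x.1 ≤ x.2) (hy : y.1 ≤ y.2) :
    smulI c (x + y) = smulI c x + smulI c y := by
  rcases le_total 0 c with h | h
  · have h1 : c * x.1 ≤ c * x.2 := mul_le_mul_of_nonneg_left hx h
    have h2 : c * y.1 ≤ c * y.2 := mul_le_mul_of_nonneg_left hy h
    have h3 : c * (x.1 + y.1) ≤ c * (x.2 + y.2) :=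
      mul_le_mul_of_nonneg_left (add_le_add hx hy) h
    simp [smulI, Prod.ext_iff, min_eq_left h1, min_eq_left h2, min_eq_left h3,
      max_eq_right h1, max_eq_right h2, max_eq_right h3, mul_add]
    linarith
  · have h1 : c * x.2 ≤ c * x.1 := mul_le_mul_of_nonpos_left hx h
    have h2 : c * y.2 ≤ c * y.1 := mul_le_mul_of_nonpos_left hy h
    have h3 : c * (x.2 + y.2) ≤ c * (x.1 + y.1) :=
      mul_le_mul_of_nonpos_left (add_le_add hx hy) h
    simp [smulI, Prod.ext_iff, min_eq_right h1, min_eq_right h2, min_eq_right h3,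
      max_eq_left h1, max_eq_left h2, max_eq_left h3, mul_add]
    linarith

lemma smulI_proper (c : ℝ) (x : ℝ × ℝ) : (smulI c x).1 ≤ (smulI c x).2 := min_le_max

lemma sum_proper {ι : Type*} (s : Finset ι) (f : ι → ℝ × ℝ)
    (hf : ∀ a ∈ s, (f a).1 ≤ (f a).2) : (∑ a ∈ s, f a).1 ≤ (∑ a ∈ s, f a).2 := by
  rw [Prod.fst_sum, Prod.snd_sum]
  exact Finset.sum_le_sum hf

lemma smulI_sum {ι : Type*} (s : Finset ι) (c : ℝ) (f : ι → ℝ × ℝ)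
    (hf : ∀ a ∈ s, (f a).1 ≤ (f a).2) :
    smulI c (∑ a ∈ s, f a) = ∑ a ∈ s, smulI c (f a) := by
  classical
  induction s using Finset.induction with
  | empty => simp [smulI, Prod.ext_iff]
  | @insert a s ha ih =>
    rw [Finset.sum_insert ha, Finset.sum_insert ha,
      smulI_add c (hf a (Finset.mem_insert_self a s))
        (sum_proper s f (fun b hb => hf b (Finset.mem_insert_of_mem hb))),
      ih (fun b hb => hf b (Finset.mem_insert_of_mem hb))]

lemma smulI_sum_single {ι : Type*} (s : Finset ι) (c : ι → ℝ) (x : ℝ × ℝ)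
    (h : ∀ a₁ ∈ s, ∀ a₂ ∈ s, c a₁ ≠ 0 → c a₂ ≠ 0 → a₁ = a₂) :
    smulI (∑ a ∈ s, c a) x = ∑ a ∈ s, smulI (c a) x := by
  by_cases hz : ∀ a ∈ s, c a = 0
  · rw [Finset.sum_eq_zero hz, Finset.sum_eq_zero (fun a ha => by
      rw [hz a ha]; exact zero_smulI x), zero_smulI]
  · push_neg at hz
    obtain ⟨a₀, ha₀, hne⟩ := hz
    rw [Finset.sum_eq_single a₀
      (fun b hb hba => by
        by_contra hb0
        exact hba (h b hb a₀ ha₀ hb0 hne))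
      (fun habs => absurd ha₀ habs),
      Finset.sum_eq_single a₀
      (fun b hb hba => by
        by_contra hb0
        have : c b ≠ 0 := by
          intro hcb
          exact hb0 (by rw [hcb]; exact zero_smulI x)
        exact hba (h b hb a₀ ha₀ this hne))
      (fun habs => absurd ha₀ habs)]

theorem stmt9 {n K : ℕ} (A0 : Matrix (Fin n) (Fin n) ℝ)
    (A : Fin K → Matrix (Fin n) (Fin n) ℝ) (R : Matrix (Fin n) (Fin n) ℝ)
    (p : Fin K → ℝ × ℝ) (hp : ∀ k, (p k).1 ≤ (p k).2)
    (hcol : ∀ k j i₁ i₂, A k i₁ j ≠ 0 → A k i₂ j ≠ 0 → i₁ = i₂) :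
    ∀ i j, ((A0 i j, A0 i j) + ∑ k, smulI ((R * A k) i j) (p k)) =
           ((A0 i j, A0 i j) + ∑ α, smulI (R i α) (∑ k, smulI (A k α j) (p k))) := by
  intro i j
  congr 1
  have hrhs : ∀ α : Fin n, smulI (R i α) (∑ k, smulI (A k α j) (p k)) =
      ∑ k, smulI (R i α * A k α j) (p k) := by
    intro α
    rw [smulI_sum _ _ _ (fun k _ => smulI_proper _ _)]
    exact Finset.sum_congr rfl (fun k _ => smulI_smulI _ _ _)
  simp only [hrhs]
  rw [Finset.sum_comm]
  refine Finset.sum_congr rfl (fun k _ => ?_)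
  rw [Matrix.mul_apply,
    smulI_sum_single _ _ _ (fun a₁ _ a₂ _ h1 h2 => hcol k j a₁ a₂
      (fun h => h1 (by rw [h, mul_zero])) (fun h => h2 (by rw [h, mul_zero])))]
end
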